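/- arXiv:2510.14639 — 4 statements merged into one kernel-verified Lean document; each statement's English description precedes it below -/
import Mathlib

section
/- For every k ∈ ℕ, the convolution of the Gaussian h_0 with the k-th Hermite function h_k satisfies (h_0 * h_k)(x) = x^k · (h_0 * h_0)(x) = √π · x^k · e^{-x²/4}. -/
open MeasureTheory Real Polynomial Filter Asymptotics

/-- Creation operator `a⁺ f = x·f - f'`. -/
noncomputable def aPlus (f : ℝ → ℝ) : ℝ → ℝ := fun x => x * f x - deriv f x

/-- Hermite functions `h_k = (a⁺)^k e^{-x²/2}`. -/
noncomputable def hermiteFn (k : ℕ) : ℝ → ℝ :=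
  aPlus^[k] (fun x => Real.exp (-x ^ 2 / 2))

noncomputable def hPoly : ℕ → Polynomial ℝ
  | 0 => 1
  | (k+1) => Polynomial.C 2 * Polynomial.X * hPoly k - (hPoly k).derivative

lemma hasDerivAt_gauss (x : ℝ) :
    HasDerivAt (fun t : ℝ => Real.exp (-t ^ 2 / 2)) (-x * Real.exp (-x ^ 2 / 2)) x := by
  have h : HasDerivAt (fun t : ℝ => -t ^ 2 / 2) (-x) x := by
    have := ((hasDerivAt_pow 2 x).neg).div_const 2
    simpa using this.congr_deriv (by ring)
  have := h.exp
  convert this using 1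
  ring

lemma hasDerivAt_pg (q : Polynomial ℝ) (x : ℝ) :
    HasDerivAt (fun t : ℝ => q.eval t * Real.exp (-t ^ 2 / 2))
      ((q.derivative.eval x - x * q.eval x) * Real.exp (-x ^ 2 / 2)) x := by
  have := (q.hasDerivAt x).mul (hasDerivAt_gauss x)
  refine this.congr_deriv ?_
  ring

lemma hermite_eq (k : ℕ) :
    hermiteFn k = fun t => (hPoly k).eval t * Real.exp (-t ^ 2 / 2) := by
  induction k with
  | zero => simp [hermiteFn, hPoly]
  | succ k ih =>
      have h1 : hermiteFn (k+1) = aPlus (hermiteFn k) := by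
        simp [hermiteFn, Function.iterate_succ_apply']
      rw [h1, ih]
      funext t
      have hd : deriv (fun t : ℝ => (hPoly k).eval t * Real.exp (-t ^ 2 / 2)) t
          = ((hPoly k).derivative.eval t - t * (hPoly k).eval t) * Real.exp (-t ^ 2 / 2) :=
        (hasDerivAt_pg _ t).deriv
      simp only [aPlus, hd, hPoly]
      simp only [Polynomial.eval_sub, Polynomial.eval_mul, Polynomial.eval_C, Polynomial.eval_X]
      ring

lemma tendsto_pg_atTop (q : Polynomial ℝ) {b : ℝ} (hb : 0 < b) :
    Filter.Tendsto (fun t : ℝ => q.eval t * Real.exp (-b * t ^ 2)) atTop (nhds 0) := by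
  apply squeeze_zero_norm' (a := fun t : ℝ => ‖q.eval t / Real.exp t‖)
  · filter_upwards [Filter.eventually_ge_atTop (max 1 (1/b))] with t ht
    have ht1 : (1 : ℝ) ≤ t := le_trans (le_max_left _ _) ht
    have htb : 1/b ≤ t := le_trans (le_max_right _ _) ht
    have h1 : t ≤ b * t ^ 2 := by
      rw [div_le_iff₀ hb] at htb
      nlinarith
    have hexp : Real.exp (-b * t ^ 2) ≤ Real.exp (-t) := by
      apply Real.exp_le_exp.2; linarith
    rw [norm_mul, norm_div]
    have e1 : ‖Real.exp (-b * t ^ 2)‖ = Real.exp (-b * t ^ 2) :=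
      abs_of_pos (Real.exp_pos _)
    have e2 : ‖Real.exp t‖ = Real.exp t := abs_of_pos (Real.exp_pos _)
    rw [e1, e2]
    rw [div_eq_mul_inv, ← Real.exp_neg]
    exact mul_le_mul_of_nonneg_left hexp (norm_nonneg _)
  · have := (q.tendsto_div_exp_atTop).norm
    simpa using this

lemma tendsto_pg_atBot (q : Polynomial ℝ) {b : ℝ} (hb : 0 < b) :
    Filter.Tendsto (fun t : ℝ => q.eval t * Real.exp (-b * t ^ 2)) atBot (nhds 0) := by
  have h := (tendsto_pg_atTop (q.comp (-Polynomial.X)) hb).comp tendsto_neg_atBot_atTop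
  convert h using 2 with t
  simp [Function.comp, Polynomial.eval_comp]

lemma tendsto_pg_atTop' (q : Polynomial ℝ) :
    Filter.Tendsto (fun t : ℝ => q.eval t * Real.exp (-t ^ 2 / 2)) atTop (nhds 0) := by
  have := tendsto_pg_atTop q (b := 1/2) (by norm_num)
  convert this using 3 with t; ring_nf

lemma tendsto_pg_atBot' (q : Polynomial ℝ) :
    Filter.Tendsto (fun t : ℝ => q.eval t * Real.exp (-t ^ 2 / 2)) atBot (nhds 0) := by
  have := tendsto_pg_atBot q (b := 1/2) (by norm_num)
  convert this using 3 with t; ring_nf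

lemma cont_pg (q : Polynomial ℝ) :
    Continuous (fun t : ℝ => q.eval t * Real.exp (-t ^ 2 / 2)) := by
  exact q.continuous_aeval.mul (by continuity)

lemma int_pg (q : Polynomial ℝ) :
    Integrable (fun t : ℝ => q.eval t * Real.exp (-t ^ 2 / 2)) := by
  have hg : Integrable (fun t : ℝ => Real.exp (-(1/4 : ℝ) * t ^ 2)) :=
    integrable_exp_neg_mul_sq (by norm_num)
  have hratio : ∀ t : ℝ, q.eval t * Real.exp (-t ^ 2 / 2) / Real.exp (-(1/4 : ℝ) * t ^ 2)
      = q.eval t * Real.exp (-(1/4 : ℝ) * t ^ 2) := by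
    intro t
    rw [div_eq_mul_inv, mul_assoc, ← Real.exp_neg, ← Real.exp_add]
    ring_nf
  have hbot : (fun t : ℝ => q.eval t * Real.exp (-t ^ 2 / 2))
      =O[atBot] fun t : ℝ => Real.exp (-(1/4 : ℝ) * t ^ 2) := by
    apply IsLittleO.isBigO
    apply isLittleO_of_tendsto (fun t h => absurd h (Real.exp_ne_zero _))
    simp only [hratio]
    exact tendsto_pg_atBot q (by norm_num)
  have htop : (fun t : ℝ => q.eval t * Real.exp (-t ^ 2 / 2))
      =O[atTop] fun t : ℝ => Real.exp (-(1/4 : ℝ) * t ^ 2) := by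
    apply IsLittleO.isBigO
    apply isLittleO_of_tendsto (fun t h => absurd h (Real.exp_ne_zero _))
    simp only [hratio]
    exact tendsto_pg_atTop q (by norm_num)
  exact (cont_pg q).locallyIntegrable.integrable_of_isBigO_atBot_atTop
    hbot (hg.integrableAtFilter _) htop (hg.integrableAtFilter _)

lemma int_master (q : Polynomial ℝ) (x : ℝ) :
    Integrable (fun t : ℝ =>
      q.eval t * (Real.exp (-(x - t) ^ 2 / 2) * Real.exp (-t ^ 2 / 2))) := by
  apply Integrable.mono' ((int_pg q).abs)
  · apply Continuous.aestronglyMeasurable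
    apply Continuous.mul q.continuous_aeval
    continuity
  · filter_upwards with t
    have h1 : Real.exp (-(x - t) ^ 2 / 2) ≤ 1 := by
      rw [show (1 : ℝ) = Real.exp 0 by simp]
      apply Real.exp_le_exp.2
      nlinarith [sq_nonneg (x - t)]
    rw [Real.norm_eq_abs, abs_mul, abs_mul]
    rw [abs_of_pos (Real.exp_pos (-(x - t) ^ 2 / 2)), abs_of_pos (Real.exp_pos (-t ^ 2 / 2))]
    calc |q.eval t| * (Real.exp (-(x - t) ^ 2 / 2) * Real.exp (-t ^ 2 / 2))
        ≤ |q.eval t| * (1 * Real.exp (-t ^ 2 / 2)) := by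
          apply mul_le_mul_of_nonneg_left _ (abs_nonneg _)
          exact mul_le_mul_of_nonneg_right h1 (Real.exp_pos _).le
      _ = |q.eval t * Real.exp (-t ^ 2 / 2)| := by
          rw [one_mul, abs_mul, abs_of_pos (Real.exp_pos _)]

lemma h0_eq : hermiteFn 0 = fun t : ℝ => Real.exp (-t ^ 2 / 2) := rfl

lemma base_integral (x : ℝ) :
    (∫ t : ℝ, Real.exp (-(x - t) ^ 2 / 2) * Real.exp (-t ^ 2 / 2))
      = Real.sqrt π * Real.exp (-x ^ 2 / 4) := by
  have h : ∀ t : ℝ, Real.exp (-(x - t) ^ 2 / 2) * Real.exp (-t ^ 2 / 2)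
      = Real.exp (-x ^ 2 / 4) * Real.exp (-(1 : ℝ) * (t - x/2) ^ 2) := by
    intro t
    rw [← Real.exp_add, ← Real.exp_add]
    congr 1
    ring
  simp_rw [h]
  rw [integral_const_mul]
  have h2 : (∫ t : ℝ, Real.exp (-(1 : ℝ) * (t - x/2) ^ 2))
      = ∫ t : ℝ, Real.exp (-(1 : ℝ) * t ^ 2) := by
    exact integral_sub_right_eq_self (fun t => Real.exp (-(1 : ℝ) * t ^ 2)) (x/2)
  rw [h2, integral_gaussian]
  rw [show π / 1 = π by ring]
  ring

/-- `(h₀ * h_k)(x) = x^k (h₀ * h₀)(x) = √π x^k e^{-x²/4}`. -/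
theorem gaussian_hermite_convolution (k : ℕ) (x : ℝ) :
    (∫ t : ℝ, hermiteFn 0 (x - t) * hermiteFn k t)
      = x ^ k * ∫ t : ℝ, hermiteFn 0 (x - t) * hermiteFn 0 t ∧
    (∫ t : ℝ, hermiteFn 0 (x - t) * hermiteFn k t)
      = Real.sqrt π * x ^ k * Real.exp (-x ^ 2 / 4) := by
  have key : ∀ k : ℕ, (∫ t : ℝ, hermiteFn 0 (x - t) * hermiteFn k t)
      = x ^ k * ∫ t : ℝ, Real.exp (-(x - t) ^ 2 / 2) * Real.exp (-t ^ 2 / 2) := by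
    intro k
    induction k with
    | zero => simp [h0_eq]
    | succ k ih =>
        set p := hPoly k with hp
        -- F and its derivative
        set F : ℝ → ℝ := fun t => Real.exp (-(x - t) ^ 2 / 2) * (p.eval t * Real.exp (-t ^ 2 / 2))
          with hF
        set R : Polynomial ℝ := (Polynomial.C x - Polynomial.X) * p
            + (p.derivative - Polynomial.X * p) with hR
        have hFderiv : ∀ t : ℝ, HasDerivAt F
            (R.eval t * (Real.exp (-(x - t) ^ 2 / 2) * Real.exp (-t ^ 2 / 2))) t := by
          intro t
          have hg : HasDerivAt (fun t : ℝ => Real.exp (-(x - t) ^ 2 / 2))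
              ((x - t) * Real.exp (-(x - t) ^ 2 / 2)) t := by
            have h1 : HasDerivAt (fun t : ℝ => x - t) (-1) t := by
              simpa using (hasDerivAt_id t).const_sub x
            have := (hasDerivAt_gauss (x - t)).comp t h1
            refine this.congr_deriv ?_
            ring
          have := hg.mul (hasDerivAt_pg p t)
          refine this.congr_deriv ?_
          simp only [hR, Polynomial.eval_add, Polynomial.eval_mul, Polynomial.eval_sub,
            Polynomial.eval_C, Polynomial.eval_X]
          ring
        have hFint : Integrable (fun t : ℝ =>
            R.eval t * (Real.exp (-(x - t) ^ 2 / 2) * Real.exp (-t ^ 2 / 2))) :=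
          int_master R x
        have hFtop : Filter.Tendsto F atTop (nhds 0) := by
          apply squeeze_zero_norm' (a := fun t : ℝ => ‖p.eval t * Real.exp (-t ^ 2 / 2)‖)
          · filter_upwards with t
            have h1 : Real.exp (-(x - t) ^ 2 / 2) ≤ 1 := by
              rw [show (1 : ℝ) = Real.exp 0 by simp]
              exact Real.exp_le_exp.2 (by nlinarith [sq_nonneg (x - t)])
            rw [hF, norm_mul]
            calc ‖Real.exp (-(x - t) ^ 2 / 2)‖ * ‖p.eval t * Real.exp (-t ^ 2 / 2)‖
                ≤ 1 * ‖p.eval t * Real.exp (-t ^ 2 / 2)‖ := by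
                  apply mul_le_mul_of_nonneg_right _ (norm_nonneg _)
                  rwa [Real.norm_eq_abs, abs_of_pos (Real.exp_pos _)]
              _ = ‖p.eval t * Real.exp (-t ^ 2 / 2)‖ := one_mul _
          · simpa using (tendsto_pg_atTop' p).norm
        have hFbot : Filter.Tendsto F atBot (nhds 0) := by
          apply squeeze_zero_norm' (a := fun t : ℝ => ‖p.eval t * Real.exp (-t ^ 2 / 2)‖)
          · filter_upwards with t
            have h1 : Real.exp (-(x - t) ^ 2 / 2) ≤ 1 := by
              rw [show (1 : ℝ) = Real.exp 0 by simp]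
              exact Real.exp_le_exp.2 (by nlinarith [sq_nonneg (x - t)])
            rw [hF, norm_mul]
            calc ‖Real.exp (-(x - t) ^ 2 / 2)‖ * ‖p.eval t * Real.exp (-t ^ 2 / 2)‖
                ≤ 1 * ‖p.eval t * Real.exp (-t ^ 2 / 2)‖ := by
                  apply mul_le_mul_of_nonneg_right _ (norm_nonneg _)
                  rwa [Real.norm_eq_abs, abs_of_pos (Real.exp_pos _)]
              _ = ‖p.eval t * Real.exp (-t ^ 2 / 2)‖ := one_mul _
          · simpa using (tendsto_pg_atBot' p).norm
        have hzero : (∫ t : ℝ,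
            R.eval t * (Real.exp (-(x - t) ^ 2 / 2) * Real.exp (-t ^ 2 / 2))) = 0 := by
          rw [MeasureTheory.integral_of_hasDerivAt_of_tendsto hFderiv hFint hFbot hFtop]
          simp
        -- Now express the integrals
        have e1 : (∫ t : ℝ, hermiteFn 0 (x - t) * hermiteFn (k+1) t)
            = ∫ t : ℝ, (Polynomial.C 2 * Polynomial.X * p - p.derivative).eval t
                * (Real.exp (-(x - t) ^ 2 / 2) * Real.exp (-t ^ 2 / 2)) := by
          congr 1
          funext t
          rw [h0_eq, hermite_eq]
          show Real.exp (-(x - t) ^ 2 / 2) * ((hPoly (k+1)).eval t * Real.exp (-t ^ 2 / 2)) = _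
          rw [show hPoly (k+1) = Polynomial.C 2 * Polynomial.X * p - p.derivative from rfl]
          ring
        have e0 : (∫ t : ℝ, hermiteFn 0 (x - t) * hermiteFn k t)
            = ∫ t : ℝ, p.eval t * (Real.exp (-(x - t) ^ 2 / 2) * Real.exp (-t ^ 2 / 2)) := by
          congr 1
          funext t
          rw [h0_eq, hermite_eq]
          ring
        -- x * I_k - I_{k+1} = ∫ F' = 0
        have hsplit : (∫ t : ℝ, ((Polynomial.C x) * p).eval t
              * (Real.exp (-(x - t) ^ 2 / 2) * Real.exp (-t ^ 2 / 2)))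
            - (∫ t : ℝ, (Polynomial.C 2 * Polynomial.X * p - p.derivative).eval t
              * (Real.exp (-(x - t) ^ 2 / 2) * Real.exp (-t ^ 2 / 2)))
            = ∫ t : ℝ, R.eval t * (Real.exp (-(x - t) ^ 2 / 2) * Real.exp (-t ^ 2 / 2)) := by
          rw [← MeasureTheory.integral_sub (int_master _ x) (int_master _ x)]
          congr 1
          funext t
          simp only [hR, Polynomial.eval_add, Polynomial.eval_mul, Polynomial.eval_sub,
            Polynomial.eval_C, Polynomial.eval_X]
          ring
        have hx : (∫ t : ℝ, ((Polynomial.C x) * p).eval t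
              * (Real.exp (-(x - t) ^ 2 / 2) * Real.exp (-t ^ 2 / 2)))
            = x * ∫ t : ℝ, p.eval t * (Real.exp (-(x - t) ^ 2 / 2) * Real.exp (-t ^ 2 / 2)) := by
          rw [← MeasureTheory.integral_const_mul]
          congr 1
          funext t
          simp only [Polynomial.eval_mul, Polynomial.eval_C]
          ring
        have : x * (∫ t : ℝ, p.eval t * (Real.exp (-(x - t) ^ 2 / 2) * Real.exp (-t ^ 2 / 2)))
            - (∫ t : ℝ, (Polynomial.C 2 * Polynomial.X * p - p.derivative).eval t
              * (Real.exp (-(x - t) ^ 2 / 2) * Real.exp (-t ^ 2 / 2))) = 0 := by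
          rw [← hx, hsplit, hzero]
        have h2 : (∫ t : ℝ, (Polynomial.C 2 * Polynomial.X * p - p.derivative).eval t
              * (Real.exp (-(x - t) ^ 2 / 2) * Real.exp (-t ^ 2 / 2)))
            = x * ∫ t : ℝ, p.eval t * (Real.exp (-(x - t) ^ 2 / 2) * Real.exp (-t ^ 2 / 2)) := by
          linarith
        rw [e1, h2, ← e0, ih]
        ring
  constructor
  · exact key k
  · rw [key k, base_integral]
    ring
end

section
/- For k ≤ ℓ natural numbers, the convolution of Hermite functions satisfies (h_k * h_ℓ)(x) = √π · e^{-x²/4} · ∑_{j=0}^{k} (-1)^j · C(k,j) · 2^j · (ℓ!/(ℓ-j)!) · x^{k+ℓ-2j} for all x ∈ ℝ. -/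
open MeasureTheory Real Finset

open Polynomial

/-- Physicists' Hermite polynomials. -/
noncomputable def Hp : ℕ → Polynomial ℝ
  | 0 => 1
  | n + 1 => Polynomial.C 2 * Polynomial.X * Hp n - Polynomial.derivative (Hp n)

lemma Hp_derivative_succ (n : ℕ) :
    derivative (Hp (n + 1)) = C ((2 : ℝ) * (n + 1)) * Hp n := by
  induction n with
  | zero => simp [Hp]
  | succ n ih =>
    have h2 : Hp (n + 2) = C 2 * X * Hp (n + 1) - derivative (Hp (n + 1)) := rfl
    rw [h2, derivative_sub, derivative_mul, derivative_mul, ih, derivative_C, derivative_X,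
      derivative_C_mul]
    have hc : C ((2 : ℝ) * ((n + 1 : ℕ) + 1)) = C 2 + C ((2 : ℝ) * ((n : ℕ) + 1)) := by
      rw [← C_add]; push_cast; ring_nf
    rw [hc]
    have h1 : Hp (n + 1) = C 2 * X * Hp n - derivative (Hp n) := rfl
    rw [h1]
    ring

lemma Hp_derivative (n : ℕ) :
    derivative (Hp n) = C ((2 : ℝ) * n) * Hp (n - 1) := by
  cases n with
  | zero => simp [Hp]
  | succ n => simpa using Hp_derivative_succ n

lemma hasDerivAt_poly_gauss (p : Polynomial ℝ) (x : ℝ) :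
    HasDerivAt (fun y => p.eval y * Real.exp (-y ^ 2 / 2))
      ((derivative p).eval x * Real.exp (-x ^ 2 / 2)
        + p.eval x * (Real.exp (-x ^ 2 / 2) * (-x))) x := by
  have h1 : HasDerivAt (fun y : ℝ => -y ^ 2 / 2) (-x) x := by
    have := ((hasDerivAt_pow 2 x).neg).div_const 2
    simpa using this.congr_deriv (by ring)
  exact (p.hasDerivAt x).mul (h1.exp.congr_deriv (by ring))

lemma hermiteFn_eq (k : ℕ) :
    hermiteFn k = fun x => (Hp k).eval x * Real.exp (-x ^ 2 / 2) := by
  induction k with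
  | zero => funext x; simp [hermiteFn, Hp]
  | succ k ih =>
    have hs : hermiteFn (k + 1) = aPlus (hermiteFn k) := by
      unfold hermiteFn
      rw [Function.iterate_succ_apply']
    funext x
    rw [hs, aPlus, ih]
    have hd : deriv (fun y => (Hp k).eval y * Real.exp (-y ^ 2 / 2)) x
        = (derivative (Hp k)).eval x * Real.exp (-x ^ 2 / 2)
          + (Hp k).eval x * (Real.exp (-x ^ 2 / 2) * (-x)) :=
      (hasDerivAt_poly_gauss (Hp k) x).deriv
    rw [hd]
    have h2 : Hp (k + 1) = C 2 * X * Hp k - derivative (Hp k) := rfl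
    rw [h2]
    simp only [eval_sub, eval_mul, eval_C, eval_X]
    ring

lemma integrable_poly_gauss (p : Polynomial ℝ) :
    Integrable (fun s : ℝ => p.eval s * Real.exp (-s ^ 2)) := by
  induction p using Polynomial.induction_on' with
  | add p q hp hq => simp only [eval_add, add_mul]; exact hp.add hq
  | monomial n c =>
    have h := integrable_rpow_mul_exp_neg_mul_sq (b := 1) one_pos
      (s := (n : ℝ)) (by exact_mod_cast neg_one_lt_zero.trans_le (Nat.cast_nonneg n))
    have he : (fun s : ℝ => ((Polynomial.monomial n) c).eval s * Real.exp (-s ^ 2))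
        = fun s : ℝ => c * (s ^ (n : ℝ) * Real.exp (-1 * s ^ 2)) := by
      funext s
      rw [Real.rpow_natCast, eval_monomial, neg_one_mul]
      ring
    rw [he]
    exact h.const_mul c

lemma tendsto_poly_gauss_atTop (p : Polynomial ℝ) :
    Filter.Tendsto (fun x : ℝ => p.eval x * Real.exp (-x ^ 2)) Filter.atTop (nhds 0) := by
  induction p using Polynomial.induction_on' with
  | add p q hp hq => simpa [add_mul] using hp.add hq
  | monomial n c =>
    simp only [eval_monomial, mul_assoc]
    rw [show (0 : ℝ) = c * 0 by ring]
    apply Filter.Tendsto.const_mul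
    apply squeeze_zero' (g := fun x : ℝ => x ^ n * Real.exp (-x))
    · filter_upwards [Filter.eventually_ge_atTop (0 : ℝ)] with x hx
      positivity
    · filter_upwards [Filter.eventually_ge_atTop (1 : ℝ)] with x hx
      have h1 : (0:ℝ) ≤ x ^ n := by positivity
      have h2 : Real.exp (-x ^ 2) ≤ Real.exp (-x) := by
        apply Real.exp_le_exp.2
        nlinarith
      exact mul_le_mul_of_nonneg_left h2 h1
    · exact tendsto_pow_mul_exp_neg_atTop_nhds_zero n

lemma tendsto_poly_gauss_atBot (p : Polynomial ℝ) :
    Filter.Tendsto (fun x : ℝ => p.eval x * Real.exp (-x ^ 2)) Filter.atBot (nhds 0) := by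
  have h := (tendsto_poly_gauss_atTop (p.comp (-X))).comp Filter.tendsto_neg_atBot_atTop
  refine h.congr fun x => ?_
  simp [Function.comp, eval_comp]

noncomputable def J (p : Polynomial ℝ) : ℝ := ∫ s : ℝ, p.eval s * Real.exp (-s ^ 2)

lemma J_one : J 1 = Real.sqrt π := by
  have := integral_gaussian 1
  simp only [neg_one_mul, div_one] at this
  simpa [J] using this

lemma J_add (p q : Polynomial ℝ) : J (p + q) = J p + J q := by
  unfold J
  rw [← integral_add (integrable_poly_gauss p) (integrable_poly_gauss q)]
  simp [add_mul]

lemma J_C_mul (c : ℝ) (p : Polynomial ℝ) : J (C c * p) = c * J p := by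
  unfold J
  rw [← integral_const_mul]
  simp [mul_assoc]

lemma J_sub (p q : Polynomial ℝ) : J (p - q) = J p - J q := by
  have h := J_add (p - q) q
  simp only [sub_add_cancel] at h
  linarith

lemma hasDerivAt_poly_gauss' (p : Polynomial ℝ) (x : ℝ) :
    HasDerivAt (fun y => p.eval y * Real.exp (-y ^ 2))
      ((derivative p - C 2 * (X * p)).eval x * Real.exp (-x ^ 2)) x := by
  have h1 : HasDerivAt (fun y : ℝ => -y ^ 2) (-(2 * x)) x := by
    have := (hasDerivAt_pow 2 x).neg
    exact this.congr_deriv (by ring)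
  have h := (p.hasDerivAt x).mul h1.exp
  refine h.congr_deriv ?_
  simp only [eval_sub, eval_mul, eval_C, eval_X]
  ring

lemma J_X_mul (p : Polynomial ℝ) : J (X * p) = J (derivative p) / 2 := by
  set g : Polynomial ℝ := derivative p - C 2 * (X * p) with hg
  have hInt : Integrable (fun s : ℝ => g.eval s * Real.exp (-s ^ 2)) :=
    integrable_poly_gauss g
  have hiv : ∀ R : ℝ, (∫ s in (-R)..R, g.eval s * Real.exp (-s ^ 2))
      = p.eval R * Real.exp (-R ^ 2) - p.eval (-R) * Real.exp (-(-R) ^ 2) := by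
    intro R
    exact intervalIntegral.integral_eq_sub_of_hasDerivAt
      (fun x _ => hasDerivAt_poly_gauss' p x) (hInt.intervalIntegrable)
  have t1 : Filter.Tendsto (fun R : ℝ => ∫ s in (-R)..R, g.eval s * Real.exp (-s ^ 2))
      Filter.atTop (nhds (∫ s : ℝ, g.eval s * Real.exp (-s ^ 2))) :=
    intervalIntegral_tendsto_integral hInt Filter.tendsto_neg_atTop_atBot Filter.tendsto_id
  have t2 : Filter.Tendsto (fun R : ℝ =>
      p.eval R * Real.exp (-R ^ 2) - p.eval (-R) * Real.exp (-(-R) ^ 2))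
      Filter.atTop (nhds (0 - 0)) :=
    (tendsto_poly_gauss_atTop p).sub
      ((tendsto_poly_gauss_atBot p).comp Filter.tendsto_neg_atTop_atBot)
  rw [show (0:ℝ) - 0 = 0 by ring] at t2
  have hJg : J g = 0 := by
    have := tendsto_nhds_unique (t1.congr fun R => hiv R) t2
    simpa [J] using this
  have : J (derivative p) - 2 * J (X * p) = 0 := by
    have h2 := J_sub (derivative p) (C 2 * (X * p))
    rw [← hg, hJg, J_C_mul] at h2
    linarith
  linarith

noncomputable def Qp (k l : ℕ) (u : ℝ) : Polynomial ℝ :=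
  (Hp k).comp (C u - X) * (Hp l).comp (C u + X)

lemma Qp_deriv (k l : ℕ) (u : ℝ) :
    derivative (Qp k l u) = C ((2:ℝ) * l) * Qp k (l - 1) u - C ((2:ℝ) * k) * Qp (k - 1) l u := by
  unfold Qp
  rw [derivative_mul, derivative_comp, derivative_comp, Hp_derivative k, Hp_derivative l]
  simp only [derivative_sub, derivative_add, derivative_C, derivative_X, mul_comp, C_comp]
  ring

lemma Qp_succ_left (k l : ℕ) (u : ℝ) :
    Qp (k + 1) l u = C (2 * u) * Qp k l u - C 2 * (X * Qp k l u)
      - C ((2:ℝ) * k) * Qp (k - 1) l u := by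
  unfold Qp
  rw [show Hp (k + 1) = C 2 * X * Hp k - derivative (Hp k) from rfl, Hp_derivative k]
  simp only [sub_comp, mul_comp, C_comp, X_comp, C_mul]
  ring

lemma Qp_succ_right (k l : ℕ) (u : ℝ) :
    Qp k (l + 1) u = C (2 * u) * Qp k l u + C 2 * (X * Qp k l u)
      - C ((2:ℝ) * l) * Qp k (l - 1) u := by
  unfold Qp
  rw [show Hp (l + 1) = C 2 * X * Hp l - derivative (Hp l) from rfl, Hp_derivative l]
  simp only [sub_comp, mul_comp, C_comp, X_comp, C_mul]
  ring

lemma J_Qp_zero (l : ℕ) (u : ℝ) : J (Qp 0 l u) = Real.sqrt π * (2 * u) ^ l := by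
  induction l with
  | zero => simp only [Qp, Hp, one_comp, one_mul, pow_zero, mul_one, J_one]
  | succ l ih =>
    rw [Qp_succ_right, J_sub, J_add, J_C_mul, J_C_mul, J_C_mul, J_X_mul, Qp_deriv,
      J_sub, J_C_mul, J_C_mul]
    simp only [Nat.zero_eq, Nat.cast_zero, mul_zero, zero_mul, sub_zero, Nat.zero_sub]
    rw [ih]
    ring

lemma J_Qp_succ (k l : ℕ) (u : ℝ) :
    J (Qp (k + 1) (l + 1) u)
      = 2 * u * J (Qp k (l + 1) u) - 2 * ((l : ℝ) + 1) * J (Qp k l u) := by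
  rw [Qp_succ_left, J_sub, J_sub, J_C_mul, J_C_mul, J_C_mul, J_X_mul, Qp_deriv,
    J_sub, J_C_mul, J_C_mul]
  simp only [Nat.add_sub_cancel]
  push_cast
  ring

lemma sum_step (k m : ℕ) (hk : k ≤ m) (y : ℝ) :
    (∑ j ∈ Finset.range (k + 2),
        (-1 : ℝ) ^ j * ((k + 1).choose j : ℝ) * 2 ^ j *
          (((m + 1).factorial : ℝ) / ((m + 1 - j).factorial : ℝ)) * y ^ (k + 1 + (m + 1) - 2 * j))
      = y * (∑ j ∈ Finset.range (k + 1),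
          (-1 : ℝ) ^ j * (k.choose j : ℝ) * 2 ^ j *
            (((m + 1).factorial : ℝ) / ((m + 1 - j).factorial : ℝ)) * y ^ (k + (m + 1) - 2 * j))
        - 2 * ((m : ℝ) + 1) * (∑ j ∈ Finset.range (k + 1),
          (-1 : ℝ) ^ j * (k.choose j : ℝ) * 2 ^ j *
            ((m.factorial : ℝ) / ((m - j).factorial : ℝ)) * y ^ (k + m - 2 * j)) := by
  set f : ℕ → ℝ := fun j => (-1 : ℝ) ^ j * ((k + 1).choose j : ℝ) * 2 ^ j *
      (((m + 1).factorial : ℝ) / ((m + 1 - j).factorial : ℝ)) * y ^ (k + 1 + (m + 1) - 2 * j)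
    with hf
  set g : ℕ → ℝ := fun j => (-1 : ℝ) ^ j * (k.choose j : ℝ) * 2 ^ j *
      (((m + 1).factorial : ℝ) / ((m + 1 - j).factorial : ℝ)) * y ^ (k + 1 + (m + 1) - 2 * j)
    with hg
  set A : ℕ → ℝ := fun i => (-1 : ℝ) ^ (i + 1) * (k.choose i : ℝ) * 2 ^ (i + 1) *
      (((m + 1).factorial : ℝ) / ((m + 1 - (i + 1)).factorial : ℝ)) *
        y ^ (k + 1 + (m + 1) - 2 * (i + 1))
    with hA
  have h1 : ∑ j ∈ Finset.range (k + 2), f j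
      = (∑ i ∈ Finset.range (k + 1), f (i + 1)) + f 0 := Finset.sum_range_succ' f (k + 1)
  have h2 : ∀ i ∈ Finset.range (k + 1), f (i + 1) = A i + g (i + 1) := by
    intro i _
    simp only [hf, hA, hg, Nat.choose_succ_succ (k) (i)]
    push_cast
    ring
  have h3 : (∑ i ∈ Finset.range (k + 1), f (i + 1))
      = (∑ i ∈ Finset.range (k + 1), A i) + ∑ i ∈ Finset.range (k + 1), g (i + 1) := by
    rw [← Finset.sum_add_distrib]
    exact Finset.sum_congr rfl h2
  have h4 : (∑ i ∈ Finset.range (k + 1), g (i + 1)) + g 0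
      = ∑ j ∈ Finset.range (k + 2), g j := (Finset.sum_range_succ' g (k + 1)).symm
  have hf0 : f 0 = g 0 := by simp [hf, hg]
  have h5 : ∑ j ∈ Finset.range (k + 2), g j = ∑ j ∈ Finset.range (k + 1), g j := by
    rw [Finset.sum_range_succ]
    simp [hg, Nat.choose_eq_zero_of_lt (Nat.lt_succ_self k)]
  have h6 : ∑ j ∈ Finset.range (k + 1), g j
      = y * ∑ j ∈ Finset.range (k + 1),
          (-1 : ℝ) ^ j * (k.choose j : ℝ) * 2 ^ j *
            (((m + 1).factorial : ℝ) / ((m + 1 - j).factorial : ℝ)) * y ^ (k + (m + 1) - 2 * j) := by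
    rw [Finset.mul_sum]
    refine Finset.sum_congr rfl fun j hj => ?_
    have hjk : j ≤ k := by simpa [Nat.lt_succ_iff] using hj
    have e1 : k + 1 + (m + 1) - 2 * j = (k + (m + 1) - 2 * j) + 1 := by omega
    simp only [hg, e1, pow_succ]
    ring
  have h7 : ∑ i ∈ Finset.range (k + 1), A i
      = -(2 * ((m : ℝ) + 1)) * ∑ j ∈ Finset.range (k + 1),
          (-1 : ℝ) ^ j * (k.choose j : ℝ) * 2 ^ j *
            ((m.factorial : ℝ) / ((m - j).factorial : ℝ)) * y ^ (k + m - 2 * j) := by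
    rw [Finset.mul_sum]
    refine Finset.sum_congr rfl fun i hi => ?_
    have hik : i ≤ k := by simpa [Nat.lt_succ_iff] using hi
    have e1 : k + 1 + (m + 1) - 2 * (i + 1) = k + m - 2 * i := by omega
    have e2 : m + 1 - (i + 1) = m - i := by omega
    simp only [hA, e1, e2, Nat.factorial_succ, pow_succ]
    push_cast
    ring
  calc ∑ j ∈ Finset.range (k + 2), f j
      = (∑ i ∈ Finset.range (k + 1), A i) + ((∑ i ∈ Finset.range (k + 1), g (i + 1)) + g 0) := by
        rw [h1, h3, hf0]; ring
    _ = _ := by rw [h4, h5, h6, h7]; ring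

lemma keyJ : ∀ (k l : ℕ), k ≤ l → ∀ u : ℝ,
    J (Qp k l u) = Real.sqrt π * ∑ j ∈ Finset.range (k + 1),
      (-1 : ℝ) ^ j * (k.choose j : ℝ) * 2 ^ j *
        ((l.factorial : ℝ) / ((l - j).factorial : ℝ)) * (2 * u) ^ (k + l - 2 * j) := by
  intro k
  induction k with
  | zero =>
    intro l _ u
    rw [J_Qp_zero]
    have : ((l.factorial : ℝ) / (l.factorial : ℝ)) = 1 := by
      have h0 : (l.factorial : ℝ) ≠ 0 := Nat.cast_ne_zero.2 l.factorial_ne_zero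
      field_simp
    simp [this]
  | succ k ih =>
    intro l hl u
    obtain ⟨m, rfl⟩ : ∃ m, l = m + 1 := ⟨l - 1, by omega⟩
    rw [J_Qp_succ k m u, ih (m + 1) (by omega) u, ih m (by omega) u,
      show k + 1 + 1 = k + 2 from rfl, sum_step k m (by omega) (2 * u)]
    ring

/-- `(h_k * h_ℓ)(x) = √π e^{-x²/4} ∑_{j=0}^{k} (-1)^j C(k,j) 2^j (ℓ!/(ℓ-j)!) x^{k+ℓ-2j}`
for `k ≤ ℓ`. -/
theorem hermite_convolution (k ℓ : ℕ) (hkl : k ≤ ℓ) (x : ℝ) :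
    (∫ t : ℝ, hermiteFn k (x - t) * hermiteFn ℓ t)
      = Real.sqrt π * Real.exp (-x ^ 2 / 4) *
        ∑ j ∈ Finset.range (k + 1),
          (-1 : ℝ) ^ j * (k.choose j : ℝ) * 2 ^ j *
            ((ℓ.factorial : ℝ) / ((ℓ - j).factorial : ℝ)) * x ^ (k + ℓ - 2 * j) := by
  have hcongr : (fun t : ℝ => hermiteFn k (x - t) * hermiteFn ℓ t)
      = fun t : ℝ => Real.exp (-x ^ 2 / 4) *
          ((fun s : ℝ => (Qp k ℓ (x / 2)).eval s * Real.exp (-s ^ 2)) (t - x / 2)) := by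
    funext t
    rw [hermiteFn_eq, hermiteFn_eq]
    simp only [Qp, eval_mul, eval_comp, eval_sub, eval_add, eval_C, eval_X]
    rw [show x / 2 - (t - x / 2) = x - t by ring, show x / 2 + (t - x / 2) = t by ring]
    have hexp : Real.exp (-(x - t) ^ 2 / 2) * Real.exp (-t ^ 2 / 2)
        = Real.exp (-x ^ 2 / 4) * Real.exp (-(t - x / 2) ^ 2) := by
      rw [← Real.exp_add, ← Real.exp_add]; congr 1; ring
    linear_combination ((Hp k).eval (x - t) * (Hp ℓ).eval t) * hexp
  rw [hcongr, MeasureTheory.integral_const_mul,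
    MeasureTheory.integral_sub_right_eq_self
      (fun s : ℝ => (Qp k ℓ (x / 2)).eval s * Real.exp (-s ^ 2)) (x / 2)]
  have : (∫ s : ℝ, (Qp k ℓ (x / 2)).eval s * Real.exp (-s ^ 2)) = J (Qp k ℓ (x / 2)) := rfl
  rw [this, keyJ k ℓ hkl (x / 2), show 2 * (x / 2) = x by ring]
  ring
end

section
/- For every k ∈ ℕ and Schwartz functions f, g, the iterated creation operator satisfies ((a⁺)^k f) * g = ∑_{j=0}^{k} (-1)^j C(k,j) x^{k-j} · (f * ((a⁻)^j g)). -/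
open MeasureTheory Finset

/-- Annihilation operator `a⁻ f = x·f + f'` on functions. -/
noncomputable def aMinus (f : ℝ → ℝ) : ℝ → ℝ := fun x => x * f x + deriv f x

noncomputable def mulX : SchwartzMap ℝ ℝ →L[ℝ] SchwartzMap ℝ ℝ :=
  SchwartzMap.bilinLeftCLM (ContinuousLinearMap.mul ℝ ℝ)
    (ContinuousLinearMap.id ℝ ℝ).hasTemperateGrowth

lemma mulX_apply (f : SchwartzMap ℝ ℝ) (x : ℝ) : mulX f x = f x * x := rfl

noncomputable def aPS (f : SchwartzMap ℝ ℝ) : SchwartzMap ℝ ℝ :=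
  mulX f - SchwartzMap.derivCLM ℝ ℝ f

noncomputable def aMS (f : SchwartzMap ℝ ℝ) : SchwartzMap ℝ ℝ :=
  mulX f + SchwartzMap.derivCLM ℝ ℝ f

lemma aPS_coe (f : SchwartzMap ℝ ℝ) : ⇑(aPS f) = aPlus ⇑f := by
  funext y
  simp [aPS, aPlus, mulX_apply, SchwartzMap.derivCLM_apply, mul_comm]

lemma aMS_coe (f : SchwartzMap ℝ ℝ) : ⇑(aMS f) = aMinus ⇑f := by
  funext y
  simp [aMS, aMinus, mulX_apply, SchwartzMap.derivCLM_apply, mul_comm]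

lemma aPS_iter_coe (k : ℕ) (f : SchwartzMap ℝ ℝ) :
    aPlus^[k] ⇑f = ⇑(aPS^[k] f) := by
  induction k with
  | zero => rfl
  | succ k ih =>
    rw [Function.iterate_succ_apply', Function.iterate_succ_apply', ih, aPS_coe]

lemma aMS_iter_coe (k : ℕ) (f : SchwartzMap ℝ ℝ) :
    aMinus^[k] ⇑f = ⇑(aMS^[k] f) := by
  induction k with
  | zero => rfl
  | succ k ih =>
    rw [Function.iterate_succ_apply', Function.iterate_succ_apply', ih, aMS_coe]

lemma schwartz_bdd (h : SchwartzMap ℝ ℝ) : ∃ C, ∀ y : ℝ, ‖h y‖ ≤ C := by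
  obtain ⟨C, -, hC⟩ := h.decay 0 0
  exact ⟨C, fun y => by simpa using hC y⟩

lemma conv_integrable (h g : SchwartzMap ℝ ℝ) (x : ℝ) :
    Integrable (fun t => h (x - t) * g t) := by
  obtain ⟨C, hC⟩ := schwartz_bdd h
  refine g.integrable.bdd_mul (c := C) ?_ ?_
  · exact (h.continuous.comp (continuous_const.sub continuous_id)).aestronglyMeasurable
  · exact Filter.Eventually.of_forall fun t => hC _

/-- key identity: `(a⁺h)*g = x (h*g) - h*(a⁻g)` -/
lemma key (h g : SchwartzMap ℝ ℝ) (x : ℝ) :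
    (∫ t : ℝ, aPlus (⇑h) (x - t) * g t)
      = x * (∫ t : ℝ, h (x - t) * g t) - ∫ t : ℝ, h (x - t) * aMinus (⇑g) t := by
  have hu : ∀ t : ℝ, HasDerivAt (fun t => h (x - t)) (-deriv (⇑h) (x - t)) t := by
    intro t
    have h1 : HasDerivAt (fun t : ℝ => x - t) (-1) t := (hasDerivAt_id t).const_sub x
    have h2 : HasDerivAt (⇑h) (deriv (⇑h) (x - t)) (x - t) :=
      (h.differentiable.differentiableAt).hasDerivAt
    simpa [Function.comp_def] using h2.comp t h1
  have hv : ∀ t : ℝ, HasDerivAt (⇑g) (deriv (⇑g) t) t := fun t =>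
    (g.differentiable.differentiableAt).hasDerivAt
  -- integrability facts
  have hIhg : Integrable (fun t : ℝ => h (x - t) * g t) := conv_integrable h g x
  have hIhg' : Integrable (fun t : ℝ => h (x - t) * deriv (⇑g) t) := by
    have := conv_integrable h (SchwartzMap.derivCLM ℝ ℝ g) x
    simpa only [SchwartzMap.derivCLM_apply] using this
  have hIh'g : Integrable (fun t : ℝ => deriv (⇑h) (x - t) * g t) := by
    have := conv_integrable (SchwartzMap.derivCLM ℝ ℝ h) g x
    simpa only [SchwartzMap.derivCLM_apply] using this
  have hInt1 : Integrable (fun t : ℝ => h (x - t) * (t * g t)) := by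
    have := conv_integrable h (mulX g) x
    simpa only [mulX_apply, mul_comm] using this
  have hInt3 : Integrable (fun t : ℝ => x * (h (x - t) * g t)) := hIhg.const_mul x
  have hInt12 : Integrable (fun t : ℝ => h (x - t) * (t * g t) + deriv (⇑h) (x - t) * g t) :=
    hInt1.add hIh'g
  -- integration by parts
  have ibp : (∫ t : ℝ, h (x - t) * deriv (⇑g) t) = ∫ t : ℝ, deriv (⇑h) (x - t) * g t := by
    have h2 : Integrable (fun t : ℝ => (-deriv (⇑h) (x - t)) * g t) := by
      simp only [neg_mul]
      exact hIh'g.neg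
    have := integral_mul_deriv_eq_deriv_mul_of_integrable (fun t _ => hu t) (fun t _ => hv t) hIhg' h2 hIhg
    rw [this, ← integral_neg]
    congr 1; funext t; ring
  have expand : (fun t : ℝ => aPlus (⇑h) (x - t) * g t)
      = fun t : ℝ => x * (h (x - t) * g t)
          - (h (x - t) * (t * g t) + deriv (⇑h) (x - t) * g t) := by
    funext t; simp only [aPlus]; ring
  have hmin : (∫ t : ℝ, h (x - t) * aMinus (⇑g) t)
      = (∫ t : ℝ, h (x - t) * (t * g t)) + ∫ t : ℝ, h (x - t) * deriv (⇑g) t := by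
    rw [← integral_add hInt1 hIhg']
    congr 1; funext t; simp only [aMinus]; ring
  rw [expand, integral_sub hInt3 hInt12, integral_add hInt1 hIh'g, integral_const_mul,
    hmin, ibp]

lemma binom_sum (k : ℕ) (x : ℝ) (I : ℕ → ℝ) :
    (∑ j ∈ Finset.range (k + 1),
        x * ((-1 : ℝ) ^ j * (k.choose j : ℝ) * x ^ (k - j) * I j))
      - ∑ j ∈ Finset.range (k + 1),
          (-1 : ℝ) ^ j * (k.choose j : ℝ) * x ^ (k - j) * I (j + 1)
    = ∑ j ∈ Finset.range (k + 2),
        (-1 : ℝ) ^ j * ((k + 1).choose j : ℝ) * x ^ (k + 1 - j) * I j := by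
  have hA : (∑ j ∈ Finset.range (k + 1),
        x * ((-1 : ℝ) ^ j * (k.choose j : ℝ) * x ^ (k - j) * I j))
      = ∑ j ∈ Finset.range (k + 2),
          (-1 : ℝ) ^ j * (k.choose j : ℝ) * x ^ (k + 1 - j) * I j := by
    have hs := Finset.sum_range_succ
      (fun j => (-1 : ℝ) ^ j * (k.choose j : ℝ) * x ^ (k + 1 - j) * I j) (k + 1)
    rw [hs]
    simp only [Nat.choose_succ_self, Nat.cast_zero, mul_zero, zero_mul, add_zero]
    refine Finset.sum_congr rfl fun j hj => ?_
    have hjk : j ≤ k := Nat.lt_succ_iff.mp (Finset.mem_range.mp hj)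
    rw [show k + 1 - j = (k - j) + 1 by omega, pow_succ]
    ring
  have hTA : (∑ j ∈ Finset.range (k + 2),
        ((-1 : ℝ) ^ j * ((k + 1).choose j : ℝ) * x ^ (k + 1 - j) * I j
          - (-1 : ℝ) ^ j * (k.choose j : ℝ) * x ^ (k + 1 - j) * I j))
      = ∑ j ∈ Finset.range (k + 1),
          -((-1 : ℝ) ^ j * (k.choose j : ℝ) * x ^ (k - j) * I (j + 1)) := by
    rw [Finset.sum_range_succ']
    have h0 : ((-1 : ℝ) ^ 0 * (((k + 1).choose 0 : ℕ) : ℝ) * x ^ (k + 1 - 0) * I 0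
        - (-1 : ℝ) ^ 0 * ((k.choose 0 : ℕ) : ℝ) * x ^ (k + 1 - 0) * I 0) = 0 := by
      simp
    rw [h0, add_zero]
    refine Finset.sum_congr rfl fun j hj => ?_
    have hc : (((k + 1).choose (j + 1) : ℕ) : ℝ)
        = ((k.choose j : ℕ) : ℝ) + ((k.choose (j + 1) : ℕ) : ℝ) := by
      rw [Nat.choose_succ_succ]; push_cast; ring
    rw [Nat.succ_sub_succ, hc]
    ring
  rw [Finset.sum_sub_distrib, Finset.sum_neg_distrib] at hTA
  linarith [hA, hTA]

/-- `((a⁺)^k f) * g = ∑_{j=0}^{k} (-1)^j C(k,j) x^{k-j} (f * ((a⁻)^j g))`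
for Schwartz functions `f, g`. -/
theorem iterated_creation_convolution (k : ℕ) (f g : SchwartzMap ℝ ℝ) (x : ℝ) :
    (∫ t : ℝ, (aPlus^[k] f) (x - t) * g t)
      = ∑ j ∈ Finset.range (k + 1),
          (-1 : ℝ) ^ j * (k.choose j : ℝ) * x ^ (k - j) *
            ∫ t : ℝ, f (x - t) * (aMinus^[j] g) t := by
  induction k generalizing g with
  | zero => simp
  | succ k ih =>
    have hstep : (∫ t : ℝ, (aPlus^[k + 1] ⇑f) (x - t) * g t)
        = x * (∫ t : ℝ, (aPlus^[k] ⇑f) (x - t) * g t)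
          - ∫ t : ℝ, (aPlus^[k] ⇑f) (x - t) * aMinus (⇑g) t := by
      rw [Function.iterate_succ_apply', aPS_iter_coe, key, ← aPS_iter_coe]
    have hmix : (∫ t : ℝ, (aPlus^[k] ⇑f) (x - t) * aMinus (⇑g) t)
        = ∑ j ∈ Finset.range (k + 1),
            (-1 : ℝ) ^ j * (k.choose j : ℝ) * x ^ (k - j) *
              ∫ t : ℝ, f (x - t) * (aMinus^[j + 1] ⇑g) t := by
      rw [← aMS_coe, ih (aMS g)]
      refine Finset.sum_congr rfl fun j _ => ?_
      rw [aMS_coe, ← Function.iterate_succ_apply]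
    rw [hstep, ih g, hmix, Finset.mul_sum]
    exact binom_sum k x fun j => ∫ t : ℝ, f (x - t) * (aMinus^[j] ⇑g) t
end

section
/- For m, n ∈ ℕ and α > 0, the complex Itô–Hermite polynomial satisfies the operational formula ((-d/dz + α conj(z))^n (αz)^m) = H^α_{n,m}(z, conj(z)), where conj(z) is treated as a constant with respect to d/dz and H^α_{n,m}(z,w) = ∑_{j=0}^{min(n,m)} (-1)^j j! C(n,j) C(m,j) α^{n+m-j} z^{m-j} w^{n-j}. -/
open MvPolynomial Finset

/-- Complex Itô–Hermite polynomial `H^α_{n,m}(z,w)` as a bivariate polynomial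
(`X 0 = z`, `X 1 = w`). -/
noncomputable def itoHermite (α : ℝ) (n m : ℕ) : MvPolynomial (Fin 2) ℂ :=
  ∑ j ∈ Finset.range (min n m + 1),
    C ((-1 : ℂ) ^ j * (j.factorial : ℂ) * (n.choose j : ℂ) * (m.choose j : ℂ) *
        (α : ℂ) ^ (n + m - j)) * X 0 ^ (m - j) * X 1 ^ (n - j)

noncomputable def ihTerm (α : ℝ) (n m j : ℕ) : MvPolynomial (Fin 2) ℂ :=
  C ((-1 : ℂ) ^ j * (j.factorial : ℂ) * (n.choose j : ℂ) * (m.choose j : ℂ) *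
      (α : ℂ) ^ (n + m - j)) * X 0 ^ (m - j) * X 1 ^ (n - j)

lemma itoHermite_eq (α : ℝ) (n m : ℕ) :
    itoHermite α n m = ∑ j ∈ Finset.range (n + 1), ihTerm α n m j := by
  rw [itoHermite]
  refine Finset.sum_subset (Finset.range_subset_range.2 (by omega)) ?_
  intro j hj hj'
  simp only [Finset.mem_range] at hj hj'
  have hm : m < j := by omega
  simp [ihTerm, Nat.choose_eq_zero_of_lt hm]

lemma natkey (n m j : ℕ) :
    (j+1).factorial * ((n+1).choose (j+1)) * (m.choose (j+1)) =
      (m-j) * (j.factorial * (n.choose j) * (m.choose j)) +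
      (j+1).factorial * (n.choose (j+1)) * (m.choose (j+1)) := by
  rw [Nat.choose_succ_succ, Nat.mul_add, Nat.add_mul]
  congr 1
  · rw [Nat.factorial_succ]
    calc (j+1) * j.factorial * n.choose j * m.choose (j+1)
        = (m.choose (j+1) * (j+1)) * (j.factorial * n.choose j) := by ring
      _ = (m.choose j * (m - j)) * (j.factorial * n.choose j) := by
          rw [Nat.choose_succ_right_eq]
      _ = _ := by ring

lemma key_coeff (α : ℝ) (n m j : ℕ) :
    ((-1:ℂ))^(j+1) * (((j+1).factorial : ℕ):ℂ) * (((n+1).choose (j+1) : ℕ):ℂ) *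
        ((m.choose (j+1) : ℕ):ℂ) * (α:ℂ)^(n+m-j)
      = -(((m-j : ℕ):ℂ) * ((-1:ℂ)^j * (j.factorial:ℂ) * (n.choose j:ℂ) * (m.choose j:ℂ) *
            (α:ℂ)^(n+m-j)))
        + (-1:ℂ)^(j+1) * ((j+1).factorial : ℂ) * (n.choose (j+1) : ℂ) *
            (m.choose (j+1) : ℂ) * (α:ℂ)^(n+m-j) := by
  have h2 := congrArg (Nat.cast : ℕ → ℂ) (natkey n m j)
  push_cast at h2
  rw [pow_succ]
  linear_combination ((-1:ℂ))^j * (-1) * (α:ℂ)^(n+m-j) * h2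

lemma per_term (α : ℝ) (n m j : ℕ) :
    ihTerm α (n+1) m (j+1)
      = -(pderiv 0 (ihTerm α n m j))
        + C ((-1:ℂ)^(j+1) * ((j+1).factorial : ℂ) * (n.choose (j+1) : ℂ) *
              (m.choose (j+1) : ℂ) * (α:ℂ)^(n+m-j)) * X 0 ^ (m-(j+1)) * X 1 ^ (n-j) := by
  have he : n + 1 + m - (j+1) = n + m - j := by omega
  have he2 : n + 1 - (j+1) = n - j := by omega
  have he3 : m - (j+1) = m - j - 1 := by omega
  simp only [ihTerm, he, he2, he3, pderiv_mul, pderiv_C, pderiv_pow, pderiv_X_self,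
    pderiv_X_of_ne (show (1:Fin 2) ≠ 0 by decide), mul_zero, zero_mul, mul_one]
  rw [key_coeff]
  simp only [map_add, map_sub, map_neg, map_mul, map_pow, map_one, C_eq_coe_nat]
  ring


lemma U_eq (α : ℝ) (n m j : ℕ) (hj : j < n) :
    C ((-1:ℂ)^(j+1) * ((j+1).factorial : ℂ) * (n.choose (j+1) : ℂ) *
          (m.choose (j+1) : ℂ) * (α:ℂ)^(n+m-j)) * X 0 ^ (m-(j+1)) * X 1 ^ (n-j)
      = C (α:ℂ) * X 1 * ihTerm α n m (j+1) := by
  have he : n + m - j = (n + m - (j+1)) + 1 := by omega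
  have he2 : n - j = (n - (j+1)) + 1 := by omega
  rw [ihTerm, he, he2, pow_succ, pow_succ]
  simp only [map_mul]
  ring


lemma first_eq (α : ℝ) (n m : ℕ) :
    ihTerm α (n+1) m 0 = C (α:ℂ) * X 1 * ihTerm α n m 0 := by
  rw [ihTerm, ihTerm]
  simp only [Nat.sub_zero, pow_zero, Nat.choose_zero_right]
  rw [show n + 1 + m = (n + m) + 1 from by omega, pow_succ, pow_succ]
  simp only [map_mul]
  ring

lemma step (α : ℝ) (n m : ℕ) :
    -pderiv 0 (∑ j ∈ Finset.range (n+1), ihTerm α n m j)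
        + C (α:ℂ) * X 1 * ∑ j ∈ Finset.range (n+1), ihTerm α n m j
      = ∑ j ∈ Finset.range (n+2), ihTerm α (n+1) m j := by
  rw [Finset.sum_range_succ' (fun j => ihTerm α (n+1) m j)]
  have h1 : ∑ j ∈ Finset.range (n+1), ihTerm α (n+1) m (j+1)
      = ∑ j ∈ Finset.range (n+1), (-(pderiv 0 (ihTerm α n m j))
          + C ((-1:ℂ)^(j+1) * ((j+1).factorial : ℂ) * (n.choose (j+1) : ℂ) *
              (m.choose (j+1) : ℂ) * (α:ℂ)^(n+m-j)) * X 0 ^ (m-(j+1)) * X 1 ^ (n-j)) :=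
    Finset.sum_congr rfl fun j _ => per_term α n m j
  have h2 : ∑ j ∈ Finset.range (n+1),
      (C ((-1:ℂ)^(j+1) * ((j+1).factorial : ℂ) * (n.choose (j+1) : ℂ) *
          (m.choose (j+1) : ℂ) * (α:ℂ)^(n+m-j)) * X 0 ^ (m-(j+1)) * X 1 ^ (n-j))
      = ∑ j ∈ Finset.range n, C (α:ℂ) * X 1 * ihTerm α n m (j+1) := by
    rw [Finset.sum_range_succ, Nat.choose_eq_zero_of_lt (Nat.lt_succ_self n)]
    simp only [Nat.cast_zero, mul_zero, zero_mul, map_zero, add_zero]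
    exact Finset.sum_congr rfl fun j hj => U_eq α n m j (Finset.mem_range.1 hj)
  rw [h1, Finset.sum_add_distrib, h2, map_sum, Finset.mul_sum,
    Finset.sum_range_succ' (fun j => C (α:ℂ) * X 1 * ihTerm α n m j), first_eq,
    Finset.sum_neg_distrib]
  abel

/-- Operational formula: `(-d/dz + α w)^n (αz)^m = H^α_{n,m}(z,w)` as an identity
of polynomials in `ℂ[z,w]`. -/
theorem itoHermite_operational (α : ℝ) (hα : 0 < α) (n m : ℕ) :
    (fun P : MvPolynomial (Fin 2) ℂ => -pderiv 0 P + C (α : ℂ) * X 1 * P)^[n]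
        ((C (α : ℂ) * X 0) ^ m)
      = itoHermite α n m := by
  induction n with
  | zero =>
      simp only [Function.iterate_zero, id_eq, itoHermite, Nat.zero_min, Finset.sum_range_one,
        Nat.sub_zero, Nat.zero_sub, pow_zero, Nat.choose_self, Nat.choose_zero_right,
        Nat.factorial_zero, Nat.cast_one, Nat.zero_add, zero_add, mul_one, one_mul, mul_pow,
        map_pow]
  | succ n ih =>
      rw [Function.iterate_succ_apply', ih, itoHermite_eq, itoHermite_eq]
      exact step α n m
end
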